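/- arXiv:1312.1562 — 6 statements merged into one kernel-verified Lean document; each statement's English description precedes it below -/
import Mathlib

section
/- Let A be a commutative ℝ-algebra with unit, let c be a real number, and for each integer n let ℓ_n : A → A be an ℝ-linear derivation, such that ℓ_m∘ℓ_n − ℓ_n∘ℓ_m = (m−n)·ℓ_{m+n} for all integers m, n (Witt relations). Let S ∈ A satisfy ℓ_0 S = 2S, ℓ_1 S = 0 and ℓ_2 S = 6·1. Define ℝ-linear maps L_n : A → A by L_n f = ℓ_n f for n ≥ −1, and L_n f = ℓ_n f + (c/(12·(−n−2)!))·(ℓ_{−1}^{(−n−2)} S)·f for n ≤ −2, where ℓ_{−1}^{k} denotes the k-fold iterate of ℓ_{−1}. Then for all integers m, n with m ≥ −1 or n ≥ −1, and all f ∈ A, one has the Virasoro commutation relation L_m(L_n f) − L_n(L_m f) = (m−n)·L_{m+n} f + (c/12)·m·(m²−1)·f when m+n = 0, and L_m(L_n f) − L_n(L_m f) = (m−n)·L_{m+n} f when m+n ≠ 0. -/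
/-!
Write `s k = ℓ₋₁^k S / k!` for `k ≥ 0` and `s k = 0` for `k < 0`. Then `L n = ℓ n + (c/12) s (-n-2)`
for every `n`, and for `m ≥ -1` the commutator `[L m, L n]` equals `(m - n) ℓ (m+n)` plus
multiplication by `(c/12) ℓ m (s (-n-2))`; the case `n ≥ -1` follows by antisymmetry. Everything
thus reduces to the single identity `ℓ m (s k) = (m + k + 2) s (k - m) + [m = k + 2] m (m² - 1)`,
which holds for `k = 0` by the jet conditions on `S` (and `ℓ m S = 0` for `m ≥ 3`, by commuting
with `ℓ 1`), and passes from `k` to `k + 1` by commuting `ℓ m` past `ℓ₋₁` with the Witt relation.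
-/

open Function

section

variable {K A : Type*} [Field K] [CommRing A] [Algebra K A]

def IsWittFamily (ℓ : ℤ → Derivation K A A) : Prop :=
  ∀ m n : ℤ, ∀ f : A, ℓ m (ℓ n f) - ℓ n (ℓ m f) = ((m - n : ℤ) : K) • ℓ (m + n) f

/-- Extended by zero to negative `k`, so that `L n = ℓ n + (c/12) taylorCoeff ℓ S (-n-2)` holds
uniformly in `n`. -/
def taylorCoeff (ℓ : ℤ → Derivation K A A) (S : A) (k : ℤ) : A :=
  if 0 ≤ k then (k.toNat.factorial : K)⁻¹ • (⇑(ℓ (-1)))^[k.toNat] S else 0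

section TaylorCoeff

variable {ℓ : ℤ → Derivation K A A} {S : A}

theorem taylorCoeff_of_neg {k : ℤ} (hk : k < 0) : taylorCoeff ℓ S k = 0 :=
  if_neg (by omega)

theorem taylorCoeff_natCast (k : ℕ) :
    taylorCoeff ℓ S k = (k.factorial : K)⁻¹ • (⇑(ℓ (-1)))^[k] S := by
  simp [taylorCoeff]

theorem taylorCoeff_zero : taylorCoeff ℓ S 0 = S := by
  simpa using taylorCoeff_natCast (ℓ := ℓ) (S := S) 0

theorem apply_neg_one_taylorCoeff [CharZero K] (k : ℤ) :
    ℓ (-1) (taylorCoeff ℓ S k) = ((k + 1 : ℤ) : K) • taylorCoeff ℓ S (k + 1) := by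
  rcases lt_or_ge k 0 with hk | hk
  · rw [taylorCoeff_of_neg hk, map_zero]
    rcases (by omega : k = -1 ∨ k + 1 < 0) with rfl | hk'
    · simp
    · rw [taylorCoeff_of_neg hk', smul_zero]
  · lift k to ℕ using hk
    rw [taylorCoeff_natCast, Derivation.map_smul, ← iterate_succ_apply' (ℓ (-1)),
      show (k : ℤ) + 1 = ((k + 1 : ℕ) : ℤ) by push_cast; ring, taylorCoeff_natCast, smul_smul]
    congr 1
    push_cast [Nat.factorial_succ]
    field_simp

end TaylorCoeff

namespace IsWittFamily

variable {ℓ : ℤ → Derivation K A A} {S : A}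

theorem apply_apply_neg_one (hℓ : IsWittFamily ℓ) (m : ℤ) (x : A) :
    ℓ m (ℓ (-1) x) = ℓ (-1) (ℓ m x) + ((m + 1 : ℤ) : K) • ℓ (m - 1) x := by
  have h := hℓ m (-1) x
  rw [sub_neg_eq_add, ← sub_eq_add_neg] at h
  rw [← h, add_sub_cancel]

theorem apply_eq_zero_of_three_le [CharZero K] (hℓ : IsWittFamily ℓ) (hS1 : ℓ 1 S = 0)
    (hS2 : ℓ 2 S = (6 : K) • (1 : A)) {m : ℤ} (hm : 3 ≤ m) : ℓ m S = 0 := by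
  induction m, hm using Int.leInduction with
  | base =>
    have h := hℓ 2 1 S
    rw [hS1, hS2, map_zero, Derivation.map_smul, Derivation.map_one_eq_zero, smul_zero,
      sub_zero] at h
    norm_num at h
    exact h.symm
  | succ m hm ih =>
    have h := hℓ m 1 S
    rw [hS1, ih, map_zero, map_zero, sub_zero] at h
    exact (smul_eq_zero.mp h.symm).resolve_left (by norm_cast; omega)

theorem apply_eq_taylorCoeff_add [CharZero K] (hℓ : IsWittFamily ℓ)
    (hS0 : ℓ 0 S = (2 : K) • S) (hS1 : ℓ 1 S = 0) (hS2 : ℓ 2 S = (6 : K) • (1 : A))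
    {m : ℤ} (hm : -1 ≤ m) :
    ℓ m S = ((m + 2 : ℤ) : K) • taylorCoeff ℓ S (-m)
      + (if m = 2 then (m : K) * ((m : K) ^ 2 - 1) else 0) • (1 : A) := by
  obtain rfl | rfl | rfl | rfl | hm3 := (by omega : m = -1 ∨ m = 0 ∨ m = 1 ∨ m = 2 ∨ 3 ≤ m)
  · simpa [taylorCoeff_zero] using apply_neg_one_taylorCoeff (ℓ := ℓ) (S := S) 0
  · simp [hS0, taylorCoeff_zero]
  · simp [hS1, taylorCoeff_of_neg]
  · rw [hS2, taylorCoeff_of_neg (by norm_num)]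
    norm_num
  · rw [hℓ.apply_eq_zero_of_three_le hS1 hS2 hm3, taylorCoeff_of_neg (by omega), if_neg (by omega)]
    simp

theorem apply_taylorCoeff_natCast [CharZero K] (hℓ : IsWittFamily ℓ) (hS0 : ℓ 0 S = (2 : K) • S)
    (hS1 : ℓ 1 S = 0) (hS2 : ℓ 2 S = (6 : K) • (1 : A)) (k : ℕ) {m : ℤ} (hm : -1 ≤ m) :
    ℓ m (taylorCoeff ℓ S k) = ((m + k + 2 : ℤ) : K) • taylorCoeff ℓ S (k - m)
      + (if m = k + 2 then (m : K) * ((m : K) ^ 2 - 1) else 0) • (1 : A) := by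
  induction k generalizing m with
  | zero => simpa [taylorCoeff_zero] using hℓ.apply_eq_taylorCoeff_add hS0 hS1 hS2 hm
  | succ k ih =>
    push_cast
    rcases hm.eq_or_lt with rfl | hm0
    · rw [apply_neg_one_taylorCoeff, if_neg (by omega)]
      simp only [sub_neg_eq_add, zero_smul, add_zero]
      congr 1
      push_cast
      ring
    have hk : ((k + 1 : ℤ) : K) ≠ 0 := by norm_cast
    have hsucc : taylorCoeff ℓ S (k + 1) = ((k + 1 : ℤ) : K)⁻¹ • ℓ (-1) (taylorCoeff ℓ S k) := by
      rw [apply_neg_one_taylorCoeff, inv_smul_smul₀ hk]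
    rw [hsucc, Derivation.map_smul, hℓ.apply_apply_neg_one, ih hm, ih (m := m - 1) (by omega),
      map_add, Derivation.map_smul, Derivation.map_smul, Derivation.map_one_eq_zero, smul_zero,
      add_zero, apply_neg_one_taylorCoeff, show (k : ℤ) - (m - 1) = k + 1 - m by ring,
      show (k : ℤ) - m + 1 = k + 1 - m by ring]
    -- the coefficients combine by `(m+k+2)(k-m+1) + (m+1)(m+k+1) = (k+1)(m+k+3)`
    by_cases hm3 : m = k + 3
    · subst hm3
      simp only [if_pos (show (k : ℤ) + 3 - 1 = k + 2 by ring),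
        if_pos (show (k : ℤ) + 3 = k + 1 + 2 by ring)]
      match_scalars
      · field_simp; ring
      · field_simp; ring
    · simp only [if_neg (show m - 1 ≠ k + 2 by omega), if_neg (show m ≠ k + 1 + 2 by omega)]
      match_scalars
      · field_simp; ring
      · simp

theorem apply_taylorCoeff [CharZero K] (hℓ : IsWittFamily ℓ) (hS0 : ℓ 0 S = (2 : K) • S)
    (hS1 : ℓ 1 S = 0) (hS2 : ℓ 2 S = (6 : K) • (1 : A)) (k : ℤ) {m : ℤ} (hm : -1 ≤ m) :
    ℓ m (taylorCoeff ℓ S k) = ((m + k + 2 : ℤ) : K) • taylorCoeff ℓ S (k - m)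
      + (if m = k + 2 then (m : K) * ((m : K) ^ 2 - 1) else 0) • (1 : A) := by
  rcases lt_or_ge k 0 with hk | hk
  · have hcoeff : ((m + k + 2 : ℤ) : K) • taylorCoeff ℓ S (k - m) = 0 := by
      rcases (by omega : k - m < 0 ∨ m + k + 2 = 0) with h | h
      · rw [taylorCoeff_of_neg h, smul_zero]
      · rw [h, Int.cast_zero, zero_smul]
    have hconst : (if m = k + 2 then (m : K) * ((m : K) ^ 2 - 1) else 0) = 0 := by
      split_ifs with h
      · obtain rfl | rfl | rfl : m = -1 ∨ m = 0 ∨ m = 1 := by omega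
        all_goals norm_num
      · rfl
    rw [taylorCoeff_of_neg hk, map_zero, hcoeff, hconst, zero_smul, add_zero]
  · lift k to ℕ using hk
    exact hℓ.apply_taylorCoeff_natCast hS0 hS1 hS2 k hm

end IsWittFamily

theorem eq_add_taylorCoeff_mul [CharZero K] {ℓ : ℤ → Derivation K A A} {S : A} {c : K}
    {L : ℤ → A → A} (hL₁ : ∀ n : ℤ, -1 ≤ n → ∀ f : A, L n f = ℓ n f)
    (hL₂ : ∀ n : ℤ, n ≤ -2 → ∀ f : A,
      L n f = ℓ n f
        + (c / (12 * ((-n - 2).toNat.factorial : K))) • ((⇑(ℓ (-1)))^[(-n - 2).toNat] S * f))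
    (n : ℤ) (f : A) : L n f = ℓ n f + (c / 12) • (taylorCoeff ℓ S (-n - 2) * f) := by
  rcases le_or_gt (-1) n with hn | hn
  · rw [hL₁ n hn f, taylorCoeff_of_neg (by omega), zero_mul, smul_zero, add_zero]
  · obtain ⟨k, hk⟩ : ∃ k : ℕ, -n - 2 = k := ⟨(-n - 2).toNat, by omega⟩
    rw [hL₂ n (by omega) f, hk, Int.toNat_natCast, taylorCoeff_natCast, smul_mul_assoc, smul_smul,
      div_mul_eq_div_div, div_eq_mul_inv _ (k.factorial : K)]

theorem virasoro_comm_of_neg_one_le [CharZero K] {ℓ : ℤ → Derivation K A A} (hℓ : IsWittFamily ℓ)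
    {S : A} (hS0 : ℓ 0 S = (2 : K) • S) (hS1 : ℓ 1 S = 0) (hS2 : ℓ 2 S = (6 : K) • (1 : A))
    {c : K} {L : ℤ → A → A} (hL : ∀ n f, L n f = ℓ n f + (c / 12) • (taylorCoeff ℓ S (-n - 2) * f))
    (m n : ℤ) (hm : -1 ≤ m) (f : A) :
    L m (L n f) - L n (L m f)
      = ((m - n : ℤ) : K) • L (m + n) f
        + (if m + n = 0 then c / 12 * (m : K) * ((m : K) ^ 2 - 1) else 0) • f := by
  simp only [hL, taylorCoeff_of_neg (show -m - 2 < 0 by omega), zero_mul, smul_zero, add_zero]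
  rw [map_add, Derivation.map_smul, Derivation.leibniz, hℓ.apply_taylorCoeff hS0 hS1 hS2 _ hm,
    eq_add_of_sub_eq' (hℓ m n f), show m + (-n - 2) + 2 = m - n by ring,
    show -n - 2 - m = -(m + n) - 2 by ring]
  simp only [show m = -n - 2 + 2 ↔ m + n = 0 by omega]
  split_ifs <;> simp only [smul_eq_mul, Algebra.smul_def, map_mul, map_zero] <;> ring

end

/-- Virasoro commutation relations for the operators `L n` built from Witt derivations
`ℓ n` and a Schwarzian-connection element `S` in a commutative `ℝ`-algebra. -/
theorem witt_to_virasoro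
    {A : Type*} [CommRing A] [Algebra ℝ A] (c : ℝ)
    (ℓ : ℤ → Derivation ℝ A A)
    (hWitt : ∀ m n : ℤ, ∀ f : A,
      ℓ m (ℓ n f) - ℓ n (ℓ m f) = ((m - n : ℤ) : ℝ) • ℓ (m + n) f)
    (S : A)
    (hS0 : ℓ 0 S = (2 : ℝ) • S)
    (hS1 : ℓ 1 S = 0)
    (hS2 : ℓ 2 S = (6 : ℝ) • (1 : A))
    (L : ℤ → A →ₗ[ℝ] A)
    (hL₁ : ∀ n : ℤ, -1 ≤ n → ∀ f : A, L n f = ℓ n f)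
    (hL₂ : ∀ n : ℤ, n ≤ -2 → ∀ f : A,
      L n f = ℓ n f
        + (c / (12 * ((-n - 2).toNat.factorial : ℝ))) •
            ((⇑(ℓ (-1)))^[(-n - 2).toNat] S * f)) :
    ∀ m n : ℤ, (-1 ≤ m ∨ -1 ≤ n) → ∀ f : A,
      L m (L n f) - L n (L m f)
        = ((m - n : ℤ) : ℝ) • L (m + n) f
          + (if m + n = 0 then c / 12 * (m : ℝ) * ((m : ℝ) ^ 2 - 1) else 0) • f := by
  have hL := eq_add_taylorCoeff_mul (L := fun n => ⇑(L n)) hL₁ hL₂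
  have comm := virasoro_comm_of_neg_one_le hWitt hS0 hS1 hS2 hL
  rintro m n (hm | hn) f
  · exact comm m n hm f
  · have hnm := comm n m hn f
    rw [add_comm n m] at hnm
    rw [← neg_sub, hnm]
    split_ifs with hmn
    · obtain rfl : n = -m := by omega
      push_cast
      module
    · push_cast
      module
end

section
/- Let V be a complex vector space, τ a nonzero complex number, h = (3τ−2)/4 and c = 13 − 6(τ + τ⁻¹). Let (L_n)_{n∈ℤ} be linear endomorphisms of V satisfying the Virasoro commutation relations L_m∘L_n − L_n∘L_m = (m−n)·L_{m+n} + (c/12)·m·(m²−1)·δ_{m+n,0}·id for all integers m, n. Suppose φ ∈ V satisfies L_0 φ = h·φ and L_k φ = 0 for every integer k ≥ 1. Then the vector ψ = L_{−1}(L_{−1}φ) − τ·L_{−2}φ satisfies L_0 ψ = (h+2)·ψ and L_k ψ = 0 for every integer k ≥ 1. -/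
/-!
Positive modes are generated by `L₁` and `L₂` (since `[L_k, L₁] = (k - 1) L_{k+1}`), so it is
enough to check `L₁ ψ = L₂ ψ = 0`. Commuting the positive modes through to `φ` gives
`L₁ ψ = (4h + 2 - 3τ) L₋₁ φ` and `L₂ ψ = (6h - τ (4h + c/2)) φ`, and both coefficients vanish
exactly for the Kac weight `h = h_{2,1}(τ)` and the central charge `c = 13 − 6(τ + τ⁻¹)`.
-/

section

variable {V : Type*} [AddCommGroup V] [Module ℂ V]

def IsVirasoroRep (c : ℂ) (L : ℤ → Module.End ℂ V) : Prop :=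
  ∀ m n : ℤ, ∀ v : V,
    L m (L n v) - L n (L m v)
      = ((m - n : ℤ) : ℂ) • L (m + n) v
        + (if m + n = 0 then c / 12 * (m : ℂ) * ((m : ℂ) ^ 2 - 1) else 0) • v

def IsHighestWeight (L : ℤ → Module.End ℂ V) (h : ℂ) (v : V) : Prop :=
  L 0 v = h • v ∧ ∀ k : ℤ, 1 ≤ k → L k v = 0

def singularVector (L : ℤ → Module.End ℂ V) (τ : ℂ) (φ : V) : V :=
  L (-1) (L (-1) φ) - τ • L (-2) φ

namespace IsVirasoroRep

variable {c : ℂ} {L : ℤ → Module.End ℂ V} (hL : IsVirasoroRep c L)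
include hL

theorem apply_apply (m n : ℤ) (v : V) :
    L m (L n v) = L n (L m v) + (((m - n : ℤ) : ℂ) • L (m + n) v
      + (if m + n = 0 then c / 12 * (m : ℂ) * ((m : ℂ) ^ 2 - 1) else 0) • v) :=
  eq_add_of_sub_eq' (hL m n v)

theorem apply_eigenvector {v : V} {w : ℂ} (hv : L 0 v = w • v) (n : ℤ) :
    L 0 (L n v) = (w - n) • L n v := by
  rw [hL.apply_apply, hv, map_smul]
  simp only [zero_sub, Int.cast_neg, zero_add, Int.cast_zero, mul_zero, zero_mul, ite_self,
    zero_smul, add_zero]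
  module

theorem apply_eq_zero_of_one_of_two {v : V} (h₁ : L 1 v = 0) (h₂ : L 2 v = 0) :
    ∀ k : ℤ, 1 ≤ k → L k v = 0 := by
  have step : ∀ k : ℤ, 2 ≤ k → L k v = 0 → L (k + 1) v = 0 := fun k hk hkv => by
    have hcomm := hL k 1 v
    rw [h₁, hkv, map_zero, map_zero, sub_zero, if_neg (by omega), zero_smul, add_zero] at hcomm
    have hk1 : ((k - 1 : ℤ) : ℂ) ≠ 0 := Int.cast_ne_zero.mpr (by omega)
    exact (smul_eq_zero.mp hcomm.symm).resolve_left hk1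
  intro k hk
  obtain rfl | hk2 := eq_or_lt_of_le hk
  · exact h₁
  · exact Int.leInduction h₂ step k hk2

theorem isHighestWeight_of_one_of_two {v : V} {h : ℂ} (h₀ : L 0 v = h • v) (h₁ : L 1 v = 0)
    (h₂ : L 2 v = 0) : IsHighestWeight L h v :=
  ⟨h₀, hL.apply_eq_zero_of_one_of_two h₁ h₂⟩

variable {h : ℂ} {φ : V} (hφ : IsHighestWeight L h φ)
include hφ

theorem apply_apply_of_isHighestWeight {m : ℤ} (hm : 1 ≤ m) (n : ℤ) :
    L m (L n φ) = ((m - n : ℤ) : ℂ) • L (m + n) φ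
      + (if m + n = 0 then c / 12 * (m : ℂ) * ((m : ℂ) ^ 2 - 1) else 0) • φ := by
  rw [hL.apply_apply, hφ.2 m hm, map_zero, zero_add]

theorem apply_one_neg_one : L 1 (L (-1) φ) = (2 * h) • φ := by
  rw [hL.apply_apply_of_isHighestWeight hφ le_rfl]
  norm_num [hφ.1, smul_smul]

theorem apply_one_neg_two : L 1 (L (-2) φ) = (3 : ℂ) • L (-1) φ := by
  rw [hL.apply_apply_of_isHighestWeight hφ le_rfl]
  norm_num

theorem apply_two_neg_one : L 2 (L (-1) φ) = 0 := by
  rw [hL.apply_apply_of_isHighestWeight hφ one_le_two]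
  norm_num [hφ.2 1 le_rfl]

theorem apply_two_neg_two : L 2 (L (-2) φ) = (4 * h + c / 2) • φ := by
  rw [hL.apply_apply_of_isHighestWeight hφ one_le_two]
  simp only [Int.reduceNeg, sub_neg_eq_add, Int.reduceAdd, Int.cast_ofNat, add_neg_cancel, hφ.1,
    smul_smul, ↓reduceIte]
  module

theorem apply_one_neg_one_neg_one :
    L 1 (L (-1) (L (-1) φ)) = (4 * h + 2) • L (-1) φ := by
  rw [hL.apply_apply, hL.apply_one_neg_one hφ]
  simp only [Int.reduceNeg, map_smul, sub_neg_eq_add, Int.reduceAdd, Int.cast_ofNat, add_neg_cancel,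
    hL.apply_eigenvector hφ.1, Int.cast_neg, Int.cast_one, ↓reduceIte, mul_one, one_pow, sub_self,
    mul_zero, zero_smul, add_zero]
  module

theorem apply_two_neg_one_neg_one : L 2 (L (-1) (L (-1) φ)) = (6 * h) • φ := by
  rw [hL.apply_apply, hL.apply_two_neg_one hφ]
  simp only [Int.reduceNeg, map_zero, sub_neg_eq_add, Int.reduceAdd, Int.cast_ofNat,
    hL.apply_one_neg_one hφ, smul_smul, one_ne_zero, ↓reduceIte, zero_smul, add_zero, zero_add]
  module

theorem singularVector_isHighestWeight {τ : ℂ} (hτ : τ ≠ 0) (hh : h = (3 * τ - 2) / 4)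
    (hc : c = 13 - 6 * (τ + τ⁻¹)) : IsHighestWeight L (h + 2) (singularVector L τ φ) := by
  have hw₀ : L 0 (singularVector L τ φ) = (h + 2) • singularVector L τ φ := by
    have hφ₁ := hL.apply_eigenvector hφ.1 (-1)
    rw [singularVector, map_sub, map_smul, hL.apply_eigenvector hφ₁, hL.apply_eigenvector hφ.1]
    simp only [Int.reduceNeg, Int.cast_neg, Int.cast_one, sub_neg_eq_add, Int.cast_ofNat]
    module
  have hw₁ : L 1 (singularVector L τ φ) = ((4 * h + 2) - τ * 3) • L (-1) φ := by
    rw [singularVector, map_sub, map_smul, hL.apply_one_neg_one_neg_one hφ,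
      hL.apply_one_neg_two hφ, smul_smul, sub_smul]
  have hw₂ : L 2 (singularVector L τ φ) = (6 * h - τ * (4 * h + c / 2)) • φ := by
    rw [singularVector, map_sub, map_smul, hL.apply_two_neg_one_neg_one hφ,
      hL.apply_two_neg_two hφ, smul_smul, sub_smul]
  refine hL.isHighestWeight_of_one_of_two hw₀ ?_ ?_
  · rw [hw₁, hh]
    exact smul_eq_zero_of_left (by ring) _
  · rw [hw₂, hh, hc]
    exact smul_eq_zero_of_left (by field_simp; ring) _

end IsVirasoroRep

end

/-- The level-two singular vector `ψ = L₋₁²φ − τ L₋₂ φ` built on a highest-weight vector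
`φ` of weight `h = (3τ−2)/4` and central charge `c = 13 − 6(τ + τ⁻¹)` is again
annihilated by positive modes and has `L₀`-weight `h + 2`. -/
theorem singular_vector_two_one {V : Type*} [AddCommGroup V] [Module ℂ V]
    (τ : ℂ) (hτ : τ ≠ 0)
    (h c : ℂ) (hh : h = (3 * τ - 2) / 4) (hc : c = 13 - 6 * (τ + τ⁻¹))
    (L : ℤ → Module.End ℂ V)
    (hVir : ∀ m n : ℤ, ∀ v : V,
      L m (L n v) - L n (L m v)
        = ((m - n : ℤ) : ℂ) • L (m + n) v
          + (if m + n = 0 then c / 12 * (m : ℂ) * ((m : ℂ) ^ 2 - 1) else 0) • v)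
    (φ : V) (hφ0 : L 0 φ = h • φ) (hφk : ∀ k : ℤ, 1 ≤ k → L k φ = 0) :
    L 0 (L (-1) (L (-1) φ) - τ • L (-2) φ)
        = (h + 2) • (L (-1) (L (-1) φ) - τ • L (-2) φ)
    ∧ ∀ k : ℤ, 1 ≤ k → L k (L (-1) (L (-1) φ) - τ • L (-2) φ) = 0 :=
  IsVirasoroRep.singularVector_isHighestWeight (c := c) hVir ⟨hφ0, hφk⟩ hτ hh hc
end

section
/- Fix an integer n ≥ 1 and define, for t ∈ ℝ and z ∈ ℂ, h_t(z) = z·(1 + n·t·z^n)^(−1/n), where w ↦ w^(−1/n) is the principal complex power (Complex.cpow). Then: (i) for every z ∈ ℂ and t ∈ ℝ with |n·t·z^n| < 1/4, the map s ↦ h_s(z) has derivative −(h_t(z))^{n+1} at s = t; (ii) h_0(z) = z; and (iii) for all z ∈ ℂ and t, t' ∈ ℝ with |n·t·z^n| < 1/4 and |n·t'·z^n| < 1/4, one has h_t(h_{t'}(z)) = h_{t+t'}(z). -/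
/-!
The vector field `-z^{n+1}∂_z` becomes the constant field `n ∂_w` in the coordinate `w = z^{-n}`,
so its flow is `w ↦ w + n t`; on `z` this reads `zⁿ ↦ zⁿ / (1 + n t zⁿ)`, whose `n`-th root
through `z` is `h_t`. Concretely, `h_t(z)ⁿ = zⁿ (1 + n t zⁿ)⁻¹` turns the flow law into the
identity `(1 + n t' zⁿ) (1 + n t zⁿ / (1 + n t' zⁿ)) = 1 + n (t + t') zⁿ`, and the
principal power is multiplicative on it because both factors lie in the right half-plane.
-/

open Complex

/-- The local flow `h_t(z) = z (1 + n t zⁿ)^{−1/n}` of the vector field `−z^{n+1}∂_z`. -/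
noncomputable def flowH (n : ℕ) (t : ℝ) (z : ℂ) : ℂ :=
  z * (1 + (n : ℂ) * (t : ℂ) * z ^ n) ^ (-(1 / (n : ℂ)))

namespace Complex

lemma one_add_re_pos_of_norm_lt_one {u : ℂ} (hu : ‖u‖ < 1) : 0 < (1 + u).re := by
  have := neg_le_of_abs_le (abs_re_le_norm u)
  rw [add_re, one_re]
  linarith

lemma mul_cpow_of_re_pos {a b : ℂ} (ha : 0 < a.re) (hb : 0 < b.re) (c : ℂ) :
    (a * b) ^ c = a ^ c * b ^ c := by
  have ha₀ : a ≠ 0 := fun h ↦ by simp [h] at ha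
  have hb₀ : b ≠ 0 := fun h ↦ by simp [h] at hb
  have hargs : arg a + arg b ∈ Set.Ioc (-Real.pi) Real.pi := by
    have ha' := abs_lt.mp (abs_arg_lt_pi_div_two_iff.mpr (Or.inl ha))
    have hb' := abs_lt.mp (abs_arg_lt_pi_div_two_iff.mpr (Or.inl hb))
    constructor <;> linarith [Real.pi_pos]
  rw [cpow_def_of_ne_zero (mul_ne_zero ha₀ hb₀), cpow_def_of_ne_zero ha₀,
    cpow_def_of_ne_zero hb₀, log_mul ha₀ hb₀ hargs, add_mul, exp_add]

lemma cpow_neg_one_div_natCast_pow (w : ℂ) {n : ℕ} (hn : n ≠ 0) :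
    (w ^ (-(1 / (n : ℂ)))) ^ n = w⁻¹ := by
  rw [← cpow_nat_mul, mul_neg, mul_one_div_cancel (Nat.cast_ne_zero.mpr hn), cpow_neg_one]

end Complex

section flowH

variable {n : ℕ} {z : ℂ} {t : ℝ}

@[simp]
lemma flowH_zero_left (n : ℕ) (z : ℂ) : flowH n 0 z = z := by
  simp [flowH]

lemma flowH_pow (hn : n ≠ 0) :
    flowH n t z ^ n = z ^ n * (1 + (n : ℂ) * (t : ℂ) * z ^ n)⁻¹ := by
  rw [flowH, mul_pow, cpow_neg_one_div_natCast_pow _ hn]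

lemma hasDerivAt_flowH (hn : n ≠ 0) (h : 1 + (n : ℂ) * (t : ℂ) * z ^ n ∈ slitPlane) :
    HasDerivAt (fun s : ℝ ↦ flowH n s z) (-(flowH n t z) ^ (n + 1)) t := by
  set c : ℂ := -(1 / (n : ℂ))
  set w : ℂ := 1 + (n : ℂ) * (t : ℂ) * z ^ n
  have hw₀ : w ≠ 0 := slitPlane_ne_zero h
  have hcn : c * n = -1 := by
    rw [neg_mul, one_div_mul_cancel (Nat.cast_ne_zero.mpr hn)]
  have hderiv : HasDerivAt (fun s : ℂ ↦ z * (1 + (n : ℂ) * s * z ^ n) ^ c)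
      (z * (c * w ^ (c - 1) * ((n : ℂ) * z ^ n))) t := by
    have hlin : HasDerivAt (fun s : ℂ ↦ 1 + (n : ℂ) * s * z ^ n) ((n : ℂ) * z ^ n) t := by
      simpa using (((hasDerivAt_id (t : ℂ)).const_mul (n : ℂ)).mul_const (z ^ n)).const_add 1
    exact (hlin.cpow_const h).const_mul z
  refine hderiv.comp_ofReal.congr_deriv ?_
  have hpow : flowH n t z ^ (n + 1) = z ^ (n + 1) * w⁻¹ * w ^ c := by
    rw [pow_succ, flowH_pow hn, flowH]
    ring
  rw [hpow, cpow_sub _ _ hw₀, cpow_one]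
  rw [show z * (c * (w ^ c / w) * ((n : ℂ) * z ^ n)) = c * n * (z ^ (n + 1) * w⁻¹ * w ^ c) by
    ring, hcn]
  ring

lemma flowH_flowH (hn : n ≠ 0) {t' : ℝ}
    (h : ‖(n : ℂ) * (t : ℂ) * z ^ n‖ + ‖(n : ℂ) * (t' : ℂ) * z ^ n‖ < 1) :
    flowH n t (flowH n t' z) = flowH n (t + t') z := by
  set u : ℂ := (n : ℂ) * (t : ℂ) * z ^ n
  set u' : ℂ := (n : ℂ) * (t' : ℂ) * z ^ n
  have hu' : ‖u'‖ < 1 := by linarith [norm_nonneg u]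
  have hw' : 0 < (1 + u').re := one_add_re_pos_of_norm_lt_one hu'
  have hw'₀ : 1 + u' ≠ 0 := fun h₀ ↦ by simp [h₀] at hw'
  have hq : 0 < (1 + u / (1 + u')).re := by
    refine one_add_re_pos_of_norm_lt_one ?_
    have : 1 - ‖u'‖ ≤ ‖1 + u'‖ := by simpa using norm_sub_norm_le (1 : ℂ) (-u')
    rw [norm_div, div_lt_one (by linarith)]
    linarith
  have hinner : 1 + (n : ℂ) * (t : ℂ) * flowH n t' z ^ n = 1 + u / (1 + u') := by
    rw [flowH_pow hn]
    ring
  have hprod : (1 + u') * (1 + u / (1 + u')) = 1 + (n : ℂ) * ((t + t' : ℝ) : ℂ) * z ^ n := by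
    field_simp
    push_cast
    ring
  rw [flowH, hinner, flowH, mul_assoc, ← mul_cpow_of_re_pos hw' hq, hprod, flowH]

end flowH

/-- `h_t` is a local flow of the holomorphic vector field `−z^{n+1}∂_z`:
it solves the ODE, starts at the identity, and has the local one-parameter
group property. -/
theorem flowH_is_local_flow (n : ℕ) (hn : 1 ≤ n) :
    (∀ (z : ℂ) (t : ℝ), ‖(n : ℂ) * (t : ℂ) * z ^ n‖ < 1 / 4 →
      HasDerivAt (fun s : ℝ => flowH n s z) (-(flowH n t z) ^ (n + 1)) t)
    ∧ (∀ z : ℂ, flowH n 0 z = z)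
    ∧ (∀ (z : ℂ) (t t' : ℝ), ‖(n : ℂ) * (t : ℂ) * z ^ n‖ < 1 / 4 →
        ‖(n : ℂ) * (t' : ℂ) * z ^ n‖ < 1 / 4 →
        flowH n t (flowH n t' z) = flowH n (t + t') z) := by
  have hn₀ : n ≠ 0 := Nat.one_le_iff_ne_zero.mp hn
  refine ⟨fun z t ht ↦ ?_, flowH_zero_left n, fun z t t' ht ht' ↦ ?_⟩
  · exact hasDerivAt_flowH hn₀ (mem_slitPlane_of_norm_lt_one (by linarith))
  · exact flowH_flowH hn₀ (by linarith)
end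

section
/- Let a, b, C, δ be real numbers with C ≥ 0 and δ > 0, and let θ : (0,∞) → ℝ be a continuous function such that |θ(t) − a/t − b| ≤ C·t for all t ∈ (0,1] and |θ(t)| ≤ C·exp(−δ·t) for all t ≥ 1. Then: (1) there exists a function F holomorphic on {s ∈ ℂ : Re s > −1} such that for every s with Re s > 1, ∫₀^∞ θ(t)·t^{s−1} dt = a/(s−1) + b/s + F(s); (2) consequently there exists a function G holomorphic on {s ∈ ℂ : Re s > −1, s ≠ 1} with G(s) = (1/Γ(s))·∫₀^∞ θ(t)·t^{s−1} dt for all s with Re s > 1, and G(0) = b. -/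
/-!
Split the heat trace as `θ = P + R` with `P t = a / t + b` on `(0, 1]` and `P = 0` beyond.
The Mellin transform of `P` is `a / (s - 1) + b / s` for `Re s > 1`, while `R` is `O(t)` at `0`
and decays exponentially at `∞`, so its Mellin transform is holomorphic on `Re s > -1`.
After division by `Γ`, the pole of `b / s` at `0` is cancelled by the zero of `1 / Γ`.
-/

open MeasureTheory Set Filter Topology Asymptotics Complex

noncomputable section

def polarPart (a b : ℂ) : ℝ → ℂ := (Ioc 0 1).indicator fun t => a / t + b

lemma polarPart_eq_smul_add_smul (a b : ℂ) :
    polarPart a b = fun t => a • (Ioc 0 1).indicator (fun t : ℝ => (t : ℂ) ^ (-1 : ℂ)) t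
      + b • (Ioc 0 1).indicator (fun _ => 1) t := by
  funext t
  by_cases ht : t ∈ Ioc (0 : ℝ) 1
  · simp [polarPart, ht, cpow_neg_one, div_eq_mul_inv]
  · simp [polarPart, ht]

lemma hasMellin_polarPart (a b : ℂ) {s : ℂ} (hs : 1 < s.re) :
    HasMellin (polarPart a b) s (a / (s - 1) + b / s) := by
  have h₁ := hasMellin_cpow_Ioc (-1) (s := s) (by simp; linarith)
  have h₀ := hasMellin_one_Ioc (s := s) (by linarith)
  have hsum := hasMellin_add (h₁.1.const_smul a) (h₀.1.const_smul b)
  rw [polarPart_eq_smul_add_smul]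
  refine ⟨hsum.1, ?_⟩
  rw [hsum.2, mellin_const_smul, mellin_const_smul, h₁.2, h₀.2]
  simp [div_eq_mul_inv, sub_eq_add_neg]

lemma locallyIntegrableOn_polarPart (a b : ℂ) :
    LocallyIntegrableOn (polarPart a b) (Ioi 0) := by
  rw [locallyIntegrableOn_iff isOpen_Ioi.isLocallyClosed]
  intro k hk hkc
  have hcont : ContinuousOn (fun t : ℝ => a / t + b) k :=
    (continuousOn_const.div (by fun_prop) fun t ht => ofReal_ne_zero.2 (hk ht).ne').add
      continuousOn_const
  exact (hcont.integrableOn_compact hkc).indicator measurableSet_Ioc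

lemma polarPart_eventuallyEq_zero (a b : ℂ) : polarPart a b =ᶠ[atTop] 0 := by
  filter_upwards [eventually_gt_atTop 1] with t ht
  exact indicator_of_notMem (fun h => (h.2.trans_lt ht).false) _

theorem exists_mellin_eq_polarPart_add_differentiableOn {f : ℝ → ℂ} {a b : ℂ} {r δ : ℝ}
    (hr : -1 ≤ r) (hδ : 0 < δ) (hf : LocallyIntegrableOn f (Ioi 0))
    (hf_top : f =O[atTop] fun t => Real.exp (-δ * t))
    (hf_bot : (f - polarPart a b) =O[𝓝[>] 0] (· ^ r)) :
    ∃ F : ℂ → ℂ, DifferentiableOn ℂ F {s | -r < s.re} ∧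
      ∀ s : ℂ, 1 < s.re → mellin f s = a / (s - 1) + b / s + F s := by
  set R := f - polarPart a b
  have hR : LocallyIntegrableOn R (Ioi 0) := hf.sub (locallyIntegrableOn_polarPart a b)
  have hR_top : R =O[atTop] fun t => Real.exp (-δ * t) := by
    refine hf_top.congr' ?_ EventuallyEq.rfl
    filter_upwards [polarPart_eventuallyEq_zero a b] with t ht
    simp [R, ht]
  have hR_bot : R =O[𝓝[>] 0] (· ^ (-(-r))) := by simpa only [neg_neg] using hf_bot
  refine ⟨mellin R, fun s hs =>
    (mellin_differentiableAt_of_isBigO_rpow_exp hδ hR hR_top hR_bot hs).differentiableWithinAt,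
    fun s hs => ?_⟩
  have hP := hasMellin_polarPart a b hs
  have hRs : MellinConvergent R s :=
    mellinConvergent_of_isBigO_rpow_exp hδ hR hR_top hR_bot (by linarith)
  calc mellin f s = mellin (fun t => R t + polarPart a b t) s := by simp [R]
    _ = a / (s - 1) + b / s + mellin R s := by
      rw [(hasMellin_add hRs hP.1).2, hP.2, add_comm]

lemma exists_differentiableOn_eq_inv_Gamma_mul (a b : ℂ) {F : ℂ → ℂ} {U : Set ℂ}
    (hF : DifferentiableOn ℂ F U) :
    ∃ G : ℂ → ℂ, DifferentiableOn ℂ G (U \ {1}) ∧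
      (∀ s ≠ 0, G s = (Gamma s)⁻¹ * (a / (s - 1) + b / s + F s)) ∧ G 0 = b := by
  -- `b / (s Γ(s)) = b / Γ(s + 1)`
  refine ⟨fun s => (Gamma s)⁻¹ * (a / (s - 1) + F s) + b * (Gamma (s + 1))⁻¹, ?_, ?_, ?_⟩
  · intro s hs
    have hpole : DifferentiableWithinAt ℂ (fun s => a / (s - 1)) (U \ {1}) s :=
      (differentiableWithinAt_const a).div (by fun_prop) (sub_ne_zero.2 hs.2)
    have hshift : Differentiable ℂ fun s : ℂ => (Gamma (s + 1))⁻¹ :=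
      differentiable_one_div_Gamma.comp (differentiable_id.add_const 1)
    exact ((differentiable_one_div_Gamma s).differentiableWithinAt.mul
      (hpole.add ((hF s hs.1).mono sdiff_subset))).add
      ((hshift s).differentiableWithinAt.const_mul b)
  · intro s hs
    simp only [Gamma_add_one s hs, mul_inv]
    field_simp
    ring
  · simp [Gamma_zero]

end

theorem zeta_continuation_from_heat_trace_general (a b C δ : ℝ) (hδ : 0 < δ)
    (θ : ℝ → ℝ) (hθ : ContinuousOn θ (Set.Ioi 0))
    (hsmall : ∀ t ∈ Set.Ioc (0 : ℝ) 1, |θ t - a / t - b| ≤ C * t)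
    (hlarge : ∀ t : ℝ, 1 ≤ t → |θ t| ≤ C * Real.exp (-δ * t)) :
    (∃ F : ℂ → ℂ, DifferentiableOn ℂ F {s : ℂ | -1 < s.re} ∧
      ∀ s : ℂ, 1 < s.re →
        (∫ t in Set.Ioi (0 : ℝ), (θ t : ℂ) * (t : ℂ) ^ (s - 1))
          = a / (s - 1) + b / s + F s)
    ∧ (∃ G : ℂ → ℂ, DifferentiableOn ℂ G {s : ℂ | -1 < s.re ∧ s ≠ 1} ∧
        (∀ s : ℂ, 1 < s.re →
          G s = (1 / Complex.Gamma s)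
            * ∫ t in Set.Ioi (0 : ℝ), (θ t : ℂ) * (t : ℂ) ^ (s - 1)) ∧
        G 0 = b) := by
  set φ : ℝ → ℂ := fun t => θ t
  have hmellin (s : ℂ) :
      mellin φ s = ∫ t in Ioi (0 : ℝ), (θ t : ℂ) * (t : ℂ) ^ (s - 1) := by
    simp only [mellin, φ, smul_eq_mul, mul_comm]
  have hφ_top : φ =O[atTop] fun t => Real.exp (-δ * t) := .of_bound C <| by
    filter_upwards [eventually_ge_atTop 1] with t ht
    simpa [φ] using hlarge t ht
  have hφ_bot : (φ - polarPart a b) =O[𝓝[>] 0] (· ^ (1 : ℝ)) := .of_bound C <| by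
    filter_upwards [Ioc_mem_nhdsGT zero_lt_one] with t ht
    have hcast : φ t - (a / t + b) = ((θ t - a / t - b : ℝ) : ℂ) := by push_cast [φ]; ring
    rw [Pi.sub_apply, polarPart, indicator_of_mem ht, hcast, norm_real, Real.norm_eq_abs,
      Real.rpow_one, Real.norm_of_nonneg ht.1.le]
    exact hsmall t ht
  have hφ_loc : LocallyIntegrableOn φ (Ioi 0) :=
    (continuous_ofReal.comp_continuousOn hθ).locallyIntegrableOn measurableSet_Ioi
  obtain ⟨F, hF, hF_eq⟩ :=
    exists_mellin_eq_polarPart_add_differentiableOn (by norm_num) hδ hφ_loc hφ_top hφ_bot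
  obtain ⟨G, hG, hG_eq, hG0⟩ := exists_differentiableOn_eq_inv_Gamma_mul (a : ℂ) b hF
  refine ⟨⟨F, hF, fun s hs => hmellin s ▸ hF_eq s hs⟩, G, hG, fun s hs => ?_, hG0⟩
  rw [hG_eq s (fun h => by simp [h] at hs; linarith), ← hF_eq s hs, hmellin, one_div]

/-- Meromorphic continuation of a zeta function from the short-time expansion
`θ(t) = a/t + b + O(t)` and large-time exponential decay of the heat trace. -/
theorem zeta_continuation_from_heat_trace (a b C δ : ℝ) (hC : 0 ≤ C) (hδ : 0 < δ)
    (θ : ℝ → ℝ) (hθ : ContinuousOn θ (Set.Ioi 0))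
    (hsmall : ∀ t ∈ Set.Ioc (0 : ℝ) 1, |θ t - a / t - b| ≤ C * t)
    (hlarge : ∀ t : ℝ, 1 ≤ t → |θ t| ≤ C * Real.exp (-δ * t)) :
    (∃ F : ℂ → ℂ, DifferentiableOn ℂ F {s : ℂ | -1 < s.re} ∧
      ∀ s : ℂ, 1 < s.re →
        (∫ t in Set.Ioi (0 : ℝ), (θ t : ℂ) * (t : ℂ) ^ (s - 1))
          = a / (s - 1) + b / s + F s)
    ∧ (∃ G : ℂ → ℂ, DifferentiableOn ℂ G {s : ℂ | -1 < s.re ∧ s ≠ 1} ∧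
        (∀ s : ℂ, 1 < s.re →
          G s = (1 / Complex.Gamma s)
            * ∫ t in Set.Ioi (0 : ℝ), (θ t : ℂ) * (t : ℂ) ^ (s - 1)) ∧
        G 0 = b) :=
  zeta_continuation_from_heat_trace_general a b C δ hδ θ hθ hsmall hlarge
end

section
/- Let X be a topological space, n ≥ 1, and let D_1, …, D_n be pairwise disjoint open subsets of X. Let γ_1, …, γ_n be subsets of X with γ_i ⊆ D_i for every i, and let δ ⊆ X be a preconnected subset. Then, as an identity of natural numbers between indicator values: Σ_{i=1}^{n} 𝟙[ δ∩γ_i ≠ ∅ and ¬(δ ⊆ D_i) ] = 𝟙[ δ∩(⋃_i γ_i) ≠ ∅ and ¬(δ ⊆ ⋃_i D_i) ] + Σ_{j=1}^{n} 𝟙[ δ∩γ_j ≠ ∅ and δ∩(⋃_{i<j} γ_i) ≠ ∅ ]. -/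
/-!
If `δ` stays inside `⋃ i, D i`, then, being preconnected, it lies in a single open tube `D k`;
by disjointness it meets no `γ i` other than `γ k`, and every term of the identity vanishes.
Otherwise `δ` escapes every tube, and the identity just counts the indices `i` with `δ` meeting
`γ i`: the least one is counted by the first term, every other one by the sum over `j`.
-/

open Finset

theorem Finset.card_filter_exists_lt_add_one {ι : Type*} [LinearOrder ι] (S : Finset ι)
    (hS : S.Nonempty) : #{j ∈ S | ∃ i ∈ S, i < j} + 1 = #S := by
  classical
  have hfilter : {j ∈ S | ∃ i ∈ S, i < j} = S.erase (S.min' hS) := by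
    ext j
    rw [mem_filter]
    refine ⟨fun ⟨hj, i, hi, hij⟩ => mem_erase.2 ⟨?_, hj⟩, fun hj => ?_⟩
    · rintro rfl
      exact (S.min'_le i hi).not_gt hij
    · exact ⟨mem_of_mem_erase hj, _, S.min'_mem hS, S.min'_lt_of_mem_erase_min' hS hj⟩
  rw [hfilter, card_erase_add_one (S.min'_mem hS)]

open Classical in
theorem Fintype.ite_exists_add_sum_ite_exists_lt {ι : Type*} [Fintype ι] [LinearOrder ι]
    (p : ι → Prop) :
    ((if ∃ i, p i then 1 else 0) + ∑ j, if p j ∧ ∃ i < j, p i then 1 else 0 : ℕ)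
      = ∑ i, if p i then 1 else 0 := by
  by_cases h : ∃ i, p i
  · obtain ⟨i₀, hi₀⟩ := h
    have hS : ({i | p i} : Finset ι).Nonempty := ⟨i₀, by simpa using hi₀⟩
    rw [if_pos ⟨i₀, hi₀⟩, ← card_filter, ← card_filter, add_comm,
      ← card_filter_exists_lt_add_one _ hS]
    congr 2
    ext j
    simp [and_comm]
  · push Not at h
    simp [h]

theorem IsPreconnected.subset_of_subset_iUnion {X ι : Type*} [TopologicalSpace X] {s : Set X}
    {U : ι → Set X} (hs : IsPreconnected s) (hU : ∀ i, IsOpen (U i))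
    (hdisj : Pairwise (Function.onFun Disjoint U)) (hsU : s ⊆ ⋃ i, U i) {k : ι}
    (hk : (s ∩ U k).Nonempty) : s ⊆ U k := by
  refine hs.subset_left_of_subset_union (v := ⋃ j ≠ k, U j) (hU k)
    (isOpen_biUnion fun j _ => hU j)
    (Set.disjoint_iUnion₂_right.2 fun j hj => hdisj (Ne.symm hj)) (fun x hx => ?_) hk
  obtain ⟨j, hj⟩ := Set.mem_iUnion.1 (hsU hx)
  by_cases hjk : j = k
  · exact Or.inl (hjk ▸ hj)
  · exact Or.inr (Set.mem_biUnion hjk hj)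

open Classical in
theorem loop_counting_identity_general {X : Type*} [TopologicalSpace X] (n : ℕ)
    (D : Fin n → Set X) (hopen : ∀ i, IsOpen (D i))
    (hdisj : ∀ i j, i ≠ j → Disjoint (D i) (D j))
    (γ : Fin n → Set X) (hγ : ∀ i, γ i ⊆ D i)
    (δ : Set X) (hδ : IsPreconnected δ) :
    (∑ i, if (δ ∩ γ i).Nonempty ∧ ¬ δ ⊆ D i then 1 else 0)
      = ((if (δ ∩ ⋃ i, γ i).Nonempty ∧ ¬ δ ⊆ ⋃ i, D i then 1 else 0)
          + ∑ j, if (δ ∩ γ j).Nonempty ∧ (δ ∩ ⋃ i, ⋃ (_ : i < j), γ i).Nonempty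
              then 1 else 0 : ℕ) := by
  simp only [Set.inter_iUnion, Set.nonempty_iUnion]
  by_cases hcover : δ ⊆ ⋃ i, D i
  · have hinside : ∀ i, (δ ∩ γ i).Nonempty → δ ⊆ D i := fun i hi =>
      hδ.subset_of_subset_iUnion hopen (fun i j => hdisj i j) hcover
        (hi.mono (Set.inter_subset_inter_right δ (hγ i)))
    have hunique : ∀ i j, (δ ∩ γ i).Nonempty → (δ ∩ γ j).Nonempty → i = j := by
      rintro i j hi ⟨x, hxδ, hxγ⟩
      by_contra hij
      exact Set.disjoint_left.1 (hdisj i j hij) (hinside i hi hxδ) (hγ j hxγ)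
    simp only [hcover, not_true_eq_false, and_false, if_false, zero_add]
    rw [sum_eq_zero fun i _ => if_neg fun h => h.2 (hinside i h.1),
      sum_eq_zero fun j _ => if_neg fun ⟨hj, i, hij, hi⟩ => hij.ne (hunique i j hi hj)]
  · have hescape : ∀ i, ¬ δ ⊆ D i := fun i hi => hcover (hi.trans (Set.subset_iUnion D i))
    simp only [hescape, hcover, not_false_eq_true, and_true, exists_prop]
    convert (Fintype.ite_exists_add_sum_ite_exists_lt _).symm

open Classical in
/-- The per-loop counting identity underlying the loop-measure computation
`Σ_i ν(γ_i; Σ∖D_i) − ν(⋃γ_i; Σ∖D) = Σ_j ν(γ_j; ⋃_{i<j} γ_i)` for a preconnected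
loop `δ` and pairwise disjoint open tubes `D_i ⊇ γ_i`. -/
theorem loop_counting_identity {X : Type*} [TopologicalSpace X] (n : ℕ) (hn : 1 ≤ n)
    (D : Fin n → Set X) (hopen : ∀ i, IsOpen (D i))
    (hdisj : ∀ i j, i ≠ j → Disjoint (D i) (D j))
    (γ : Fin n → Set X) (hγ : ∀ i, γ i ⊆ D i)
    (δ : Set X) (hδ : IsPreconnected δ) :
    (∑ i, if (δ ∩ γ i).Nonempty ∧ ¬ δ ⊆ D i then 1 else 0)
      = ((if (δ ∩ ⋃ i, γ i).Nonempty ∧ ¬ δ ⊆ ⋃ i, D i then 1 else 0)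
          + ∑ j, if (δ ∩ γ j).Nonempty ∧ (δ ∩ ⋃ i, ⋃ (_ : i < j), γ i).Nonempty
              then 1 else 0 : ℕ) :=
  loop_counting_identity_general n D hopen hdisj γ hγ δ hδ
end

section
/- Let n ≤ −2 be an integer and let z, w be complex numbers with |z| = |w| = 1 and z ≠ w. Define R(z,w) = (−z·w/(z−w)²) · ( (n+1)·(z^n + w^n) + (n−1)·(z^{−n} + w^{−n}) − 2·(z^{n+1} − w^{n+1})/(z−w) + 2·(z^{1−n} − w^{1−n})/(z−w) ), with integer powers. Then the real part of R(z,w) equals the real part of 2·z·w·Σ_{i=0}^{−n−2} (i+1)·(−n−1−i)·z^{i}·w^{−n−2−i}. -/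
/-!
Write `N = -n`. The prefactor `-z w / (z - w)²` is invariant under `(z, w) ↦ (z⁻¹, w⁻¹)`, so
`R(z, w) = A(z, w) + Q(z⁻¹, w⁻¹)` with `A = dtnKernelPosPart N` and `Q = dtnKernelNegPart N`
rational functions with integer coefficients. On the unit circle `z⁻¹ = conj z`, hence
`Q(z⁻¹, w⁻¹) = conj Q(z, w)` and `Re R = Re (A + Q)`. Finally
`A + Q = 2 z w ∑_{i + j = N - 2} (i + 1)(j + 1) zⁱ wʲ`, because
`(z - w)³ ∑_{i + j = N - 2} (i + 1)(j + 1) zⁱ wʲ = N (z - w)(z^N + w^N) - (z + w)(z^N - w^N)`.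
-/

open Finset

section CommRing

variable {R : Type*} [CommRing R]

theorem sub_sq_mul_sum_range_succ_mul_pow (m : ℕ) (x y : R) :
    (x - y) ^ 2 * ∑ i ∈ range (m + 1), ((i : R) + 1) * x ^ i * y ^ (m - i)
      = ((m : R) + 1) * x ^ (m + 2) - ((m : R) + 2) * x ^ (m + 1) * y + y ^ (m + 2) := by
  induction m with
  | zero => simp only [zero_add, range_one, sum_singleton]; ring
  | succ m ih =>
    have hterm : ∀ i ∈ range (m + 1), ((i : R) + 1) * x ^ i * y ^ (m + 1 - i)
        = ((i : R) + 1) * x ^ i * y ^ (m - i) * y := fun i hi => by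
      rw [Nat.sub_add_comm (Nat.le_of_lt_succ (mem_range.mp hi)), pow_succ]; ring
    rw [sum_range_succ, sum_congr rfl hterm, ← sum_mul, Nat.sub_self, pow_zero, mul_one]
    push_cast
    linear_combination y * ih

theorem sub_pow_three_mul_sum_range_succ_mul_pow (m : ℕ) (x y : R) :
    (x - y) ^ 3 * ∑ i ∈ range (m + 1), ((i : R) + 1) * ((m : R) + 1 - i) * x ^ i * y ^ (m - i)
      = ((m : R) + 2) * (x - y) * (x ^ (m + 2) + y ^ (m + 2))
        - (x + y) * (x ^ (m + 2) - y ^ (m + 2)) := by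
  induction m with
  | zero => simp only [zero_add, range_one, sum_singleton]; ring
  | succ m ih =>
    have hterm : ∀ i ∈ range (m + 1),
        ((i : R) + 1) * (((m + 1 : ℕ) : R) + 1 - i) * x ^ i * y ^ (m + 1 - i)
          = ((i : R) + 1) * ((m : R) + 1 - i) * x ^ i * y ^ (m - i) * y
            + ((i : R) + 1) * x ^ i * y ^ (m - i) * y := fun i hi => by
      rw [Nat.sub_add_comm (Nat.le_of_lt_succ (mem_range.mp hi)), pow_succ]; push_cast; ring
    rw [sum_range_succ, sum_congr rfl hterm, sum_add_distrib, ← sum_mul, ← sum_mul,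
      Nat.sub_self, pow_zero, mul_one]
    push_cast
    linear_combination y * ih + y * (x - y) * sub_sq_mul_sum_range_succ_mul_pow m x y

end CommRing

section Field

variable {F : Type*} [Field F]

def dtnKernelPosPart (N : ℕ) (z w : F) : F :=
  -z * w / (z - w) ^ 2 *
    (-((N : F) + 1) * (z ^ N + w ^ N) + 2 * (z ^ (N + 1) - w ^ (N + 1)) / (z - w))

def dtnKernelNegPart (N : ℕ) (z w : F) : F :=
  -z * w / (z - w) ^ 2 *
    ((1 - (N : F)) * (z ^ N + w ^ N) + 2 * (w * z ^ N - z * w ^ N) / (z - w))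

theorem map_dtnKernelNegPart {F' : Type*} [Field F'] (f : F →+* F') (N : ℕ) (z w : F) :
    f (dtnKernelNegPart N z w) = dtnKernelNegPart N (f z) (f w) := by
  simp [dtnKernelNegPart, map_div₀, map_ofNat]

theorem dtnKernel_eq_posPart_add_negPart_inv (N : ℕ) {z w : F} (hz : z ≠ 0) (hw : w ≠ 0)
    (hzw : z ≠ w) :
    (-z * w / (z - w) ^ 2) *
        ((((-(N : ℤ) : ℤ) : F) + 1) * (z ^ (-(N : ℤ)) + w ^ (-(N : ℤ)))
          + (((-(N : ℤ) : ℤ) : F) - 1) * (z ^ (-(-(N : ℤ))) + w ^ (-(-(N : ℤ))))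
          - 2 * (z ^ (-(N : ℤ) + 1) - w ^ (-(N : ℤ) + 1)) / (z - w)
          + 2 * (z ^ (1 - -(N : ℤ)) - w ^ (1 - -(N : ℤ))) / (z - w))
      = dtnKernelPosPart N z w + dtnKernelNegPart N z⁻¹ w⁻¹ := by
  have hzw' : z - w ≠ 0 := sub_ne_zero.mpr hzw
  simp only [neg_neg, zpow_neg, zpow_natCast, zpow_add₀ hz, zpow_add₀ hw, zpow_sub₀ hz,
    zpow_sub₀ hw, zpow_one, dtnKernelPosPart, dtnKernelNegPart, inv_pow, Int.cast_neg,
    Int.cast_natCast]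
  field_simp
  ring

theorem dtnKernelPosPart_add_negPart (m : ℕ) {z w : F} (hzw : z ≠ w) :
    dtnKernelPosPart (m + 2) z w + dtnKernelNegPart (m + 2) z w
      = 2 * z * w *
        ∑ i ∈ range (m + 1), ((i : F) + 1) * ((m : F) + 1 - i) * z ^ i * w ^ (m - i) := by
  have hzw' : z - w ≠ 0 := sub_ne_zero.mpr hzw
  rw [← mul_div_cancel_left₀ (∑ i ∈ range (m + 1), _) (pow_ne_zero 3 hzw'),
    sub_pow_three_mul_sum_range_succ_mul_pow, dtnKernelPosPart, dtnKernelNegPart]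
  field_simp
  push_cast
  ring

end Field

/-- The real part of the kernel `R(z,w)` of the variation of the
Dirichlet-to-Neumann operator on the unit circle. -/
theorem dtn_variation_kernel_re (n : ℤ) (hn : n ≤ -2) (z w : ℂ)
    (hz : ‖z‖ = 1) (hw : ‖w‖ = 1) (hzw : z ≠ w) :
    ((-z * w / (z - w) ^ 2) *
        (((n : ℂ) + 1) * (z ^ n + w ^ n) + ((n : ℂ) - 1) * (z ^ (-n) + w ^ (-n))
          - 2 * (z ^ (n + 1) - w ^ (n + 1)) / (z - w)
          + 2 * (z ^ (1 - n) - w ^ (1 - n)) / (z - w))).re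
      = (2 * z * w * ∑ i ∈ Finset.range ((-n - 2).toNat + 1),
          ((i : ℂ) + 1) * (-(n : ℂ) - 1 - (i : ℂ)) * z ^ i * w ^ ((-n - 2).toNat - i)).re := by
  obtain ⟨m, rfl⟩ : ∃ m : ℕ, n = -((m + 2 : ℕ) : ℤ) := ⟨(-n - 2).toNat, by omega⟩
  have hm : (-(-((m + 2 : ℕ) : ℤ)) - 2).toNat = m := by omega
  have hz0 : z ≠ 0 := norm_ne_zero_iff.mp (hz ▸ one_ne_zero)
  have hw0 : w ≠ 0 := norm_ne_zero_iff.mp (hw ▸ one_ne_zero)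
  have hcoeff : ∀ i : ℕ, -((-((m + 2 : ℕ) : ℤ) : ℤ) : ℂ) - 1 - i = (m : ℂ) + 1 - i :=
    fun i => by push_cast; ring
  simp only [hm, hcoeff]
  rw [dtnKernel_eq_posPart_add_negPart_inv (m + 2) hz0 hw0 hzw,
    ← dtnKernelPosPart_add_negPart m hzw, Complex.add_re, Complex.add_re,
    Complex.inv_eq_conj hz, Complex.inv_eq_conj hw, ← map_dtnKernelNegPart, Complex.conj_re]
end
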